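/- Suppose the symmetric Assumption 2.1(i) and (iii) hold, and take η² = 1. Regard f₂(β) = (B(β)+C(β) − β^K·T)² − F(β)² and g₂(β) = 4·A(β)·D(β) as real functions of β ∈ [0,1]. Then f₂ and g₂ are differentiable at 1 from within [0,1], with f₂′(1) = −4·A(1)(C′(1) − K(C(1)+D(1))) − 4·D(1)(B′(1) − K(A(1)+B(1))) and g₂′(1) = 4(A(1)·D′(1) + D(1)·A′(1)), so that f₂′(1) − g₂′(1) = −4·[D(1)(A′(1) − K·A(1) + B′(1) − K·B(1)) + A(1)(C′(1) − K·C(1) + D′(1) − K·D(1))]. In particular, if the ergodicity condition (2.7) holds then f₂′(1) < g₂′(1). -/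

import Mathlib

open scoped BigOperators

/-- `Gval a β = Σ_{m=0}^∞ a_m β^m`, encoding `A(β) = Σ_{k=-∞}^K a_k β^{K-k}`
via the reindexing `m = K - k`. -/
noncomputable def Gval (a : ℕ → ℝ) (β : ℝ) : ℝ := ∑' m : ℕ, a m * β ^ m

/-- `A(1)`. -/
noncomputable def Gone (a : ℕ → ℝ) : ℝ := ∑' m : ℕ, a m

/-- `A'(1) = Σ_{k=-∞}^K (K-k) a_k`. -/
noncomputable def Gder (a : ℕ → ℝ) : ℝ := ∑' m : ℕ, (m : ℝ) * a m

/-- `T = A(1)+B(1)+C(1)+D(1)`. -/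
noncomputable def Tval (a b cc d : ℕ → ℝ) : ℝ := Gone a + Gone b + Gone cc + Gone d

/-- `F(β) = β^K (A(1)+B(1)-C(1)-D(1)) - B(β) + C(β)`. -/
noncomputable def Fval (K : ℕ) (a b cc d : ℕ → ℝ) (β : ℝ) : ℝ :=
  β ^ K * (Gone a + Gone b - Gone cc - Gone d) - Gval b β + Gval cc β

/-- `f₂(β) = (B(β)+C(β) - β^K T)² - F(β)²` (the case `η² = 1`). -/
noncomputable def f2R (K : ℕ) (a b cc d : ℕ → ℝ) (β : ℝ) : ℝ :=
  (Gval b β + Gval cc β - β ^ K * Tval a b cc d) ^ 2 - Fval K a b cc d β ^ 2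

/-- `g₂(β) = 4 A(β) D(β)` (the case `η² = 1`). -/
noncomputable def g2R (a d : ℕ → ℝ) (β : ℝ) : ℝ := 4 * Gval a β * Gval d β

/-! The slope of `A` at `1` is `Σ a_m (1 + β + ⋯ + β^(m-1))`; for `|β| ≤ 1` the `m`-th term is
dominated by `m |a_m|` and tends to `m a_m`, so dominated convergence gives `A'(1) = Σ m a_m` as a
one-sided derivative. The derivatives of `f₂` and `g₂` then follow from the product rule at `β = 1`,
where `B + C - T = -(A + D)` and `F = A - D`. -/

open Filter

lemma Gval_one (a : ℕ → ℝ) : Gval a 1 = Gone a := by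
  simp [Gval, Gone]

lemma Summable.of_nat_mul {a : ℕ → ℝ} (h : Summable fun m : ℕ => (m : ℝ) * a m) :
    Summable a :=
  h.norm.of_norm_bounded_eventually_nat <| eventually_atTop.2 ⟨1, fun m hm => by
    rw [norm_mul, Real.norm_natCast]
    exact le_mul_of_one_le_left (norm_nonneg _) (by exact_mod_cast hm)⟩

lemma Summable.mul_pow_of_abs_le_one {a : ℕ → ℝ} (h : Summable a) {β : ℝ} (hβ : |β| ≤ 1) :
    Summable fun m => a m * β ^ m :=
  h.norm.of_norm_bounded fun m => by
    rw [norm_mul, norm_pow, Real.norm_eq_abs]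
    exact mul_le_of_le_one_right (abs_nonneg _) (pow_le_one₀ (abs_nonneg β) hβ)

lemma slope_Gval_one {a : ℕ → ℝ} (h : Summable a) {β : ℝ} (hβ : |β| ≤ 1) (hβ1 : β ≠ 1) :
    slope (Gval a) 1 β = ∑' m, a m * ∑ j ∈ Finset.range m, β ^ j := by
  rw [slope_def_field, Gval_one, Gval, Gone, div_eq_iff (sub_ne_zero.2 hβ1),
    ← (h.mul_pow_of_abs_le_one hβ).tsum_sub h, ← tsum_mul_right]
  congr 1 with m
  rw [mul_assoc, geom_sum_mul, mul_sub, mul_one]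

lemma abs_geom_sum_le {β : ℝ} (hβ : |β| ≤ 1) (m : ℕ) : |∑ j ∈ Finset.range m, β ^ j| ≤ m :=
  calc |∑ j ∈ Finset.range m, β ^ j| ≤ ∑ j ∈ Finset.range m, |β| ^ j := by
        simpa only [abs_pow] using Finset.abs_sum_le_sum_abs (fun j => β ^ j) (Finset.range m)
    _ ≤ ∑ j ∈ Finset.range m, (1 : ℝ) :=
        Finset.sum_le_sum fun j _ => pow_le_one₀ (abs_nonneg β) hβ
    _ = m := by simp

theorem hasDerivWithinAt_Gval_one {a : ℕ → ℝ} (h : Summable fun m : ℕ => (m : ℝ) * a m) :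
    HasDerivWithinAt (Gval a) (Gder a) (Set.Icc (-1) 1) 1 := by
  rw [hasDerivWithinAt_iff_tendsto_slope]
  have hsl : ∀ β ∈ Set.Icc (-1 : ℝ) 1 \ {1},
      ∑' m, a m * ∑ j ∈ Finset.range m, β ^ j = slope (Gval a) 1 β :=
    fun β hβ => (slope_Gval_one h.of_nat_mul (abs_le.2 hβ.1) hβ.2).symm
  refine (tendsto_tsum_of_dominated_convergence h.abs (fun m => ?_) ?_).congr'
    (eventually_nhdsWithin_of_forall hsl)
  · have hcont : Continuous fun β : ℝ => a m * ∑ j ∈ Finset.range m, β ^ j := by fun_prop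
    simpa [mul_comm] using (hcont.tendsto 1).mono_left nhdsWithin_le_nhds
  · filter_upwards [self_mem_nhdsWithin] with β hβ m
    rw [Real.norm_eq_abs, abs_mul, abs_mul, Nat.abs_cast, mul_comm (m : ℝ)]
    exact mul_le_mul_of_nonneg_left (abs_geom_sum_le (abs_le.2 hβ.1) m) (abs_nonneg _)

section DerivAtOne

variable {s : Set ℝ}

theorem hasDerivWithinAt_f2R_one (K : ℕ) (a d : ℕ → ℝ) {b cc : ℕ → ℝ}
    (hb : HasDerivWithinAt (Gval b) (Gder b) s 1)
    (hc : HasDerivWithinAt (Gval cc) (Gder cc) s 1) :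
    HasDerivWithinAt (f2R K a b cc d)
      (-4 * Gone a * (Gder cc - K * (Gone cc + Gone d))
        - 4 * Gone d * (Gder b - K * (Gone a + Gone b))) s 1 := by
  have hpow : HasDerivWithinAt (fun β : ℝ => β ^ K) K s 1 := by
    simpa using (hasDerivAt_pow K (1 : ℝ)).hasDerivWithinAt
  have hP : HasDerivWithinAt (fun β => Gval b β + Gval cc β - β ^ K * Tval a b cc d)
      (Gder b + Gder cc - K * Tval a b cc d) s 1 :=
    (hb.add hc).sub (hpow.mul_const _)
  have hF : HasDerivWithinAt (Fval K a b cc d)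
      (K * (Gone a + Gone b - Gone cc - Gone d) - Gder b + Gder cc) s 1 :=
    ((hpow.mul_const _).sub hb).add hc
  refine ((hP.pow 2).sub (hF.pow 2)).congr_deriv ?_
  simp only [Gval_one, Fval, Tval, one_pow, one_mul]
  ring

theorem hasDerivWithinAt_g2R_one {a d : ℕ → ℝ}
    (ha : HasDerivWithinAt (Gval a) (Gder a) s 1)
    (hd : HasDerivWithinAt (Gval d) (Gder d) s 1) :
    HasDerivWithinAt (g2R a d) (4 * (Gone a * Gder d + Gone d * Gder a)) s 1 :=
  ((ha.const_mul 4).mul hd).congr_deriv (by rw [Gval_one, Gval_one]; ring)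

end DerivAtOne

theorem stmt11_general (K : ℕ) (a b cc d : ℕ → ℝ)
    (dera : Summable (fun m : ℕ => (m : ℝ) * a m))
    (derb : Summable (fun m : ℕ => (m : ℝ) * b m))
    (derc : Summable (fun m : ℕ => (m : ℝ) * cc m))
    (derd : Summable (fun m : ℕ => (m : ℝ) * d m)) :
    HasDerivWithinAt (f2R K a b cc d)
        (-4 * Gone a * (Gder cc - K * (Gone cc + Gone d))
          - 4 * Gone d * (Gder b - K * (Gone a + Gone b)))
        (Set.Icc (0 : ℝ) 1) 1
    ∧ HasDerivWithinAt (g2R a d)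
        (4 * (Gone a * Gder d + Gone d * Gder a)) (Set.Icc (0 : ℝ) 1) 1
    ∧ (-4 * Gone a * (Gder cc - K * (Gone cc + Gone d))
          - 4 * Gone d * (Gder b - K * (Gone a + Gone b)))
        - 4 * (Gone a * Gder d + Gone d * Gder a)
      = -4 * (Gone d * (Gder a - K * Gone a + Gder b - K * Gone b)
          + Gone a * (Gder cc - K * Gone cc + Gder d - K * Gone d))
    ∧ (0 < Gone d * (Gder a - K * Gone a + Gder b - K * Gone b)
          + Gone a * (Gder cc - K * Gone cc + Gder d - K * Gone d) →
        -4 * Gone a * (Gder cc - K * (Gone cc + Gone d))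
            - 4 * Gone d * (Gder b - K * (Gone a + Gone b))
          < 4 * (Gone a * Gder d + Gone d * Gder a)) := by
  have hunit : Set.Icc (0 : ℝ) 1 ⊆ Set.Icc (-1) 1 := Set.Icc_subset_Icc_left (by norm_num)
  have hderiv {x : ℕ → ℝ} (hx : Summable fun m : ℕ => (m : ℝ) * x m) :
      HasDerivWithinAt (Gval x) (Gder x) (Set.Icc 0 1) 1 :=
    (hasDerivWithinAt_Gval_one hx).mono hunit
  have hdiff : (-4 * Gone a * (Gder cc - K * (Gone cc + Gone d))
        - 4 * Gone d * (Gder b - K * (Gone a + Gone b)))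
      - 4 * (Gone a * Gder d + Gone d * Gder a)
      = -4 * (Gone d * (Gder a - K * Gone a + Gder b - K * Gone b)
        + Gone a * (Gder cc - K * Gone cc + Gder d - K * Gone d)) := by ring
  exact ⟨hasDerivWithinAt_f2R_one K a d (hderiv derb) (hderiv derc),
    hasDerivWithinAt_g2R_one (hderiv dera) (hderiv derd), hdiff, fun h => by linarith⟩

/-- Under the symmetric Assumption 2.1(i) and (iii), with `η² = 1`, the real functions
`f₂` and `g₂` are differentiable at `1` from within `[0,1]` with the stated derivatives;
consequently `f₂'(1) - g₂'(1) = -4[D(1)(A'(1)-K·A(1)+B'(1)-K·B(1)) +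
A(1)(C'(1)-K·C(1)+D'(1)-K·D(1))]`, and the ergodicity condition (2.7) implies
`f₂'(1) < g₂'(1)`. -/
theorem stmt11 (c K : ℕ) (hc : 1 ≤ c) (hK : 1 ≤ K) (a b cc d : ℕ → ℝ)
    (nna : ∀ m, 0 ≤ a m) (nnb : ∀ m, 0 ≤ b m)
    (nnc : ∀ m, 0 ≤ cc m) (nnd : ∀ m, 0 ≤ d m)
    (suma : Summable a) (sumb : Summable b) (sumc : Summable cc) (sumd : Summable d)
    (dera : Summable (fun m : ℕ => (m : ℝ) * a m))
    (derb : Summable (fun m : ℕ => (m : ℝ) * b m))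
    (derc : Summable (fun m : ℕ => (m : ℝ) * cc m))
    (derd : Summable (fun m : ℕ => (m : ℝ) * d m)) :
    HasDerivWithinAt (f2R K a b cc d)
        (-4 * Gone a * (Gder cc - K * (Gone cc + Gone d))
          - 4 * Gone d * (Gder b - K * (Gone a + Gone b)))
        (Set.Icc (0 : ℝ) 1) 1
    ∧ HasDerivWithinAt (g2R a d)
        (4 * (Gone a * Gder d + Gone d * Gder a)) (Set.Icc (0 : ℝ) 1) 1
    ∧ (-4 * Gone a * (Gder cc - K * (Gone cc + Gone d))
          - 4 * Gone d * (Gder b - K * (Gone a + Gone b)))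
        - 4 * (Gone a * Gder d + Gone d * Gder a)
      = -4 * (Gone d * (Gder a - K * Gone a + Gder b - K * Gone b)
          + Gone a * (Gder cc - K * Gone cc + Gder d - K * Gone d))
    ∧ (0 < Gone d * (Gder a - K * Gone a + Gder b - K * Gone b)
          + Gone a * (Gder cc - K * Gone cc + Gder d - K * Gone d) →
        -4 * Gone a * (Gder cc - K * (Gone cc + Gone d))
            - 4 * Gone d * (Gder b - K * (Gone a + Gone b))
          < 4 * (Gone a * Gder d + Gone d * Gder a)) :=
  stmt11_general K a b cc d dera derb derc derd
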